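/- Let κ > 0, set α(t) = ∫₀^{κ√t} e^{-r²/2} dr and D(t) = (1/(2t²))·∫₀^∞ e^{-r²/(2t)} r³ sinh(κr) log(sinh(κr)/(κr)) dr for t > 0. Then for every t > 0: D(t) > (1/2)κ²t(κ²t + 5) + (1/2)κ t^{1/2}(κ⁴t² + 6κ²t + 3) e^{κ²t/2} α(t) - (1/2)√(π/2)·κ t^{1/2}(κ²t + 3) e^{κ²t/2} · log(1 + 2κ√(2/π)·t^{1/2}(κ²t + 5)/(κ²t + 3)·e^{-κ²t/2} + 2√(2/π)·(κ⁴t² + 6κ²t + 3)/(κ²t + 3)·α(t)). -/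

import Mathlib

open Real MeasureTheory

/-- `α(t) = ∫₀^{κ√t} e^{-r²/2} dr`. -/
noncomputable def alphaFun (κ t : ℝ) : ℝ :=
  ∫ r in (0 : ℝ)..(κ * Real.sqrt t), Real.exp (-r ^ 2 / 2)

/-- `D(t) = (1/(2t²)) ∫₀^∞ e^{-r²/(2t)} r³ sinh(κr) log(sinh(κr)/(κr)) dr`
(the derivative of `η`). -/
noncomputable def etaDeriv (κ t : ℝ) : ℝ :=
  (1 / (2 * t ^ 2)) * ∫ r in Set.Ioi (0 : ℝ),
    Real.exp (-r ^ 2 / (2 * t)) * r ^ 3 * Real.sinh (κ * r) *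
      Real.log (Real.sinh (κ * r) / (κ * r))

/-!
For `x > 0` one has `(1 + 2x) sinh x > x eˣ`, i.e. `log (sinh x / x) > x - log (1 + 2x)`, and
bounding the concave function `log (1 + 2x)` by its tangent line at `1 + c` gives
`log (sinh x / x) > x - log (1 + c) - (2x - c) / (1 + c)` for every `c > -1`. Integrating this
against the weight `w(r) = e^{-r²/(2t)} r³ sinh (κr)` at `x = κr` and choosing `c = 2κJ/Z`,
where `Z = ∫ w` and `J = ∫ w r`, makes the terms linear in `c` cancel:
`2t² D(t) > κJ - Z log (1 + 2κJ/Z)`.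

Both moments are explicit. Writing `sinh` as a difference of exponentials reduces them to the
moments `Kₙ(β) = ∫₀^∞ rⁿ e^{-r²/(2t) + βr} dr` at `β = ±κ`; integration by parts gives the
recurrence `Kₙ₊₂ = t (β Kₙ₊₁ + (n + 1) Kₙ)`, and completing the square gives
`K₀(β) = e^{β²t/2} √t (√(π/2) + α)` with `α = ∫₀^{β√t} e^{-u²/2} du`.
-/

open Set Filter

section Elementary

variable {x : ℝ}

theorem log_le_log_add_sub_div {y z : ℝ} (hy : 0 < y) (hz : 0 < z) :
    log y ≤ log z + (y - z) / z := by
  have h := log_le_sub_one_of_pos (div_pos hy hz)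
  rw [log_div hy.ne' hz.ne'] at h
  rw [sub_div, div_self hz.ne']
  linarith

theorem sub_log_one_add_two_mul_lt_log_sinh_div_self (hx : 0 < x) :
    x - log (1 + 2 * x) < log (sinh x / x) := by
  have h2x : 0 < 1 + 2 * x := by linarith
  have hexp : 2 * x + 1 < exp x * exp x := by
    rw [← exp_add, ← two_mul]
    exact add_one_lt_exp (by positivity)
  have hsinh : exp x * x < sinh x * (1 + 2 * x) := by
    rw [sinh_eq, exp_neg]
    have := exp_pos x
    field_simp
    nlinarith
  have := log_lt_log (by positivity) ((div_lt_div_iff₀ h2x hx).mpr hsinh)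
  rwa [log_div (exp_pos x).ne' h2x.ne', log_exp] at this

theorem lt_log_sinh_div_self {c : ℝ} (hx : 0 < x) (hc : 0 < 1 + c) :
    x - log (1 + c) - (2 * x - c) / (1 + c) < log (sinh x / x) := by
  have h := log_le_log_add_sub_div (by linarith : (0 : ℝ) < 1 + 2 * x) hc
  rw [show 1 + 2 * x - (1 + c) = 2 * x - c by ring] at h
  linarith [sub_log_one_add_two_mul_lt_log_sinh_div_self hx]

theorem log_sinh_div_self_nonneg (hx : 0 < x) : 0 ≤ log (sinh x / x) :=
  log_nonneg <| (one_le_div hx).mpr (self_lt_sinh_iff.mpr hx).le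

theorem log_sinh_div_self_lt (hx : 0 < x) : log (sinh x / x) < x := by
  rw [log_lt_iff_lt_exp (div_pos (sinh_pos_iff.mpr hx) hx), div_lt_iff₀ hx, sinh_eq, exp_neg]
  have h : exp (2 * x) * (1 - 2 * x) < 1 := by
    have := mul_lt_mul_of_pos_left (add_one_lt_exp (by linarith : -(2 * x) < 0).ne)
      (exp_pos (2 * x))
    rwa [← exp_add, add_neg_cancel, exp_zero, neg_add_eq_sub] at this
  rw [two_mul, exp_add] at h
  have := exp_pos x
  field_simp
  nlinarith

end Elementary

theorem setIntegral_pos_of_forall_pos {X : Type*} [MeasurableSpace X] {μ : Measure X}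
    {s : Set X} {f : X → ℝ} (hs : MeasurableSet s) (hμs : μ s ≠ 0) (hf : ∀ x ∈ s, 0 < f x)
    (hfi : IntegrableOn f s μ) : 0 < ∫ x in s, f x ∂μ := by
  rw [setIntegral_pos_iff_support_of_nonneg_ae
    ((ae_restrict_iff' hs).2 (ae_of_all _ fun x hx => (hf x hx).le)) hfi]
  exact (pos_iff_ne_zero.2 hμs).trans_le (measure_mono fun x hx => ⟨(hf x hx).ne', hx⟩)

theorem setIntegral_lt_setIntegral_of_forall_lt {X : Type*} [MeasurableSpace X] {μ : Measure X}
    {s : Set X} {f g : X → ℝ} (hs : MeasurableSet s) (hμs : μ s ≠ 0) (hfg : ∀ x ∈ s, f x < g x)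
    (hf : IntegrableOn f s μ) (hg : IntegrableOn g s μ) : ∫ x in s, f x ∂μ < ∫ x in s, g x ∂μ := by
  have := setIntegral_pos_of_forall_pos hs hμs (fun x hx => sub_pos.2 (hfg x hx)) (hg.sub hf)
  rwa [integral_sub hg hf, sub_pos] at this

section Weighted

variable {w : ℝ → ℝ} {κ : ℝ}

theorem integrableOn_mul_log_sinh_div_self (hκ : 0 < κ) (hw_nonneg : ∀ r ∈ Ioi (0 : ℝ), 0 ≤ w r)
    (hw : IntegrableOn w (Ioi 0)) (hwr : IntegrableOn (fun r => w r * r) (Ioi 0)) :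
    IntegrableOn (fun r => w r * log (sinh (κ * r) / (κ * r))) (Ioi 0) := by
  refine (hwr.const_mul κ).mono'
    (hw.aestronglyMeasurable.mul (by fun_prop : Measurable _).aestronglyMeasurable) ?_
  filter_upwards [ae_restrict_mem measurableSet_Ioi] with r hr
  have hx : 0 < κ * r := mul_pos hκ hr
  rw [norm_mul, norm_of_nonneg (hw_nonneg r hr), norm_of_nonneg (log_sinh_div_self_nonneg hx)]
  calc w r * log (sinh (κ * r) / (κ * r)) ≤ w r * (κ * r) :=
        mul_le_mul_of_nonneg_left (log_sinh_div_self_lt hx).le (hw_nonneg r hr)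
    _ = κ * (w r * r) := by ring

theorem integral_mul_log_sinh_div_self_gt (hκ : 0 < κ) (hw_pos : ∀ r ∈ Ioi (0 : ℝ), 0 < w r)
    (hw : IntegrableOn w (Ioi 0)) (hwr : IntegrableOn (fun r => w r * r) (Ioi 0)) :
    κ * (∫ r in Ioi 0, w r * r) - (∫ r in Ioi 0, w r) *
        log (1 + 2 * κ * (∫ r in Ioi 0, w r * r) / ∫ r in Ioi 0, w r) <
      ∫ r in Ioi 0, w r * log (sinh (κ * r) / (κ * r)) := by
  set Z := ∫ r in Ioi 0, w r
  set J := ∫ r in Ioi 0, w r * r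
  have hZ : 0 < Z := setIntegral_pos_of_forall_pos measurableSet_Ioi (by simp) hw_pos hw
  have hJ : 0 < J := setIntegral_pos_of_forall_pos measurableSet_Ioi (by simp)
    (fun r hr => mul_pos (hw_pos r hr) hr) hwr
  set c := 2 * κ * J / Z with hc
  have hc1 : 0 < 1 + c := by positivity
  set L := log (1 + c)
  have hlower : ∫ r in Ioi 0, ((κ - 2 * κ / (1 + c)) * (w r * r) + (c / (1 + c) - L) * w r) =
      κ * J - Z * L := by
    rw [integral_add (hwr.const_mul _) (hw.const_mul _), integral_const_mul, integral_const_mul, hc]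
    field_simp
    ring
  rw [← hlower]
  refine setIntegral_lt_setIntegral_of_forall_lt measurableSet_Ioi (by simp) (fun r hr => ?_)
    ((hwr.const_mul _).add (hw.const_mul _))
    (integrableOn_mul_log_sinh_div_self hκ (fun r hr => (hw_pos r hr).le) hw hwr)
  calc _ = w r * (κ * r - L - (2 * (κ * r) - c) / (1 + c)) := by field_simp; ring
    _ < _ := mul_lt_mul_of_pos_left (lt_log_sinh_div_self (mul_pos hκ hr) hc1) (hw_pos r hr)

end Weighted

theorem integral_Ioi_eq_neg_of_hasDerivAt {E : Type*} [NormedAddCommGroup E] [NormedSpace ℝ E]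
    [CompleteSpace E] {f f' : ℝ → E} {a : ℝ} (hderiv : ∀ x ∈ Ici a, HasDerivAt f (f' x) x)
    (hf : IntegrableOn f (Ioi a)) (hf' : IntegrableOn f' (Ioi a)) :
    ∫ x in Ioi a, f' x = -f a := by
  rw [integral_Ioi_of_hasDerivAt_of_tendsto' hderiv hf'
    (tendsto_zero_of_hasDerivAt_of_integrableOn_Ioi (fun x hx => hderiv x (Ioi_subset_Ici_self hx))
      hf' hf),
    zero_sub]

theorem integral_Ioi_comp_add_right {E : Type*} [NormedAddCommGroup E] [NormedSpace ℝ E]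
    (g : ℝ → E) (a b : ℝ) : ∫ x in Ioi a, g (x + b) = ∫ x in Ioi (a + b), g x := by
  simpa using (measurePreserving_add_right volume b).setIntegral_preimage_emb
    (measurableEmbedding_addRight b) g (Ioi (a + b))

theorem alphaFun_neg (κ t : ℝ) : alphaFun (-κ) t = -alphaFun κ t := by
  have h := intervalIntegral.integral_comp_neg (a := 0) (b := κ * √t) fun u => exp (-u ^ 2 / 2)
  simp only [neg_sq, neg_zero] at h
  rw [alphaFun, alphaFun, neg_mul, h, ← intervalIntegral.integral_symm]

section GaussMoment

variable {t : ℝ}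

noncomputable def gaussMomentIoi (t β : ℝ) (n : ℕ) : ℝ :=
  ∫ r in Ioi 0, r ^ n * exp (-r ^ 2 / (2 * t) + β * r)

theorem exp_quadratic_le (ht : 0 < t) (β r : ℝ) :
    exp (-r ^ 2 / (2 * t) + β * r) ≤ exp (β ^ 2 * t) * exp (-(1 / (4 * t)) * r ^ 2) := by
  rw [← exp_add, exp_le_exp]
  have h : β * r ≤ β ^ 2 * t + r ^ 2 / (4 * t) := by
    rw [← sub_le_iff_le_add', le_div_iff₀ (by positivity)]
    nlinarith [sq_nonneg (r - 2 * β * t)]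
  have e : -r ^ 2 / (2 * t) + r ^ 2 / (4 * t) = -(1 / (4 * t)) * r ^ 2 := by
    field_simp
    ring
  linarith

theorem integrable_pow_mul_exp_quadratic (ht : 0 < t) (n : ℕ) (β : ℝ) :
    Integrable fun r : ℝ => r ^ n * exp (-r ^ 2 / (2 * t) + β * r) := by
  have hgauss : Integrable fun r : ℝ => r ^ n * exp (-(1 / (4 * t)) * r ^ 2) := by
    simpa [rpow_natCast] using integrable_rpow_mul_exp_neg_mul_sq (by positivity : 0 < 1 / (4 * t))
      (by linarith [(Nat.cast_nonneg n : (0 : ℝ) ≤ n)] : (-1 : ℝ) < n)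
  refine (hgauss.norm.const_mul (exp (β ^ 2 * t))).mono' (by fun_prop) (ae_of_all _ fun r => ?_)
  rw [norm_mul, norm_mul, norm_of_nonneg (exp_pos _).le, norm_of_nonneg (exp_pos _).le,
    mul_left_comm]
  exact mul_le_mul_of_nonneg_left (exp_quadratic_le ht β r) (norm_nonneg _)

theorem hasDerivAt_exp_quadratic (ht : 0 < t) (β x : ℝ) :
    HasDerivAt (fun r => exp (-r ^ 2 / (2 * t) + β * r))
      ((β - x / t) * exp (-x ^ 2 / (2 * t) + β * x)) x := by
  have h : HasDerivAt (fun r => -r ^ 2 / (2 * t) + β * r) (β - x / t) x := by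
    refine (((hasDerivAt_pow 2 x).neg.div_const (2 * t)).add
      ((hasDerivAt_id x).const_mul β)).congr_deriv ?_
    field_simp
    ring
  exact h.exp.congr_deriv (mul_comm _ _)

theorem gaussMomentIoi_one (ht : 0 < t) (β : ℝ) :
    gaussMomentIoi t β 1 = t * (β * gaussMomentIoi t β 0 + 1) := by
  have hK := integrable_pow_mul_exp_quadratic ht
  have h := integral_Ioi_eq_neg_of_hasDerivAt (a := 0)
    (f' := fun r => β * (r ^ 0 * exp (-r ^ 2 / (2 * t) + β * r)) -
      t⁻¹ * (r ^ 1 * exp (-r ^ 2 / (2 * t) + β * r)))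
    (fun x _ => (hasDerivAt_exp_quadratic ht β x).congr_deriv (by field_simp))
    (by simpa using (hK 0 β).integrableOn)
    (((hK 0 β).const_mul β).sub ((hK 1 β).const_mul t⁻¹)).integrableOn
  rw [integral_sub, integral_const_mul, integral_const_mul] at h
  · change β * gaussMomentIoi t β 0 - t⁻¹ * gaussMomentIoi t β 1 = _ at h
    have h1 : t⁻¹ * gaussMomentIoi t β 1 = β * gaussMomentIoi t β 0 + 1 := by
      norm_num at h
      linarith
    rw [← h1, mul_inv_cancel_left₀ ht.ne']
  exacts [((hK 0 β).const_mul β).integrableOn, ((hK 1 β).const_mul t⁻¹).integrableOn]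

theorem gaussMomentIoi_add_two (ht : 0 < t) (β : ℝ) (n : ℕ) :
    gaussMomentIoi t β (n + 2) =
      t * (β * gaussMomentIoi t β (n + 1) + (n + 1) * gaussMomentIoi t β n) := by
  have hK := integrable_pow_mul_exp_quadratic ht
  have hderiv (x : ℝ) : HasDerivAt (fun r => r ^ (n + 1) * exp (-r ^ 2 / (2 * t) + β * r))
      ((n + 1) * (x ^ n * exp (-x ^ 2 / (2 * t) + β * x)) +
        β * (x ^ (n + 1) * exp (-x ^ 2 / (2 * t) + β * x)) -
        t⁻¹ * (x ^ (n + 2) * exp (-x ^ 2 / (2 * t) + β * x))) x := by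
    refine ((hasDerivAt_pow (n + 1) x).mul (hasDerivAt_exp_quadratic ht β x)).congr_deriv ?_
    push_cast
    field_simp
    ring
  have h := integral_Ioi_eq_neg_of_hasDerivAt (a := 0) (fun x _ => hderiv x)
    (hK (n + 1) β).integrableOn
    ((((hK n β).const_mul _).add ((hK (n + 1) β).const_mul β)).sub
      ((hK (n + 2) β).const_mul t⁻¹)).integrableOn
  rw [integral_sub, integral_add, integral_const_mul, integral_const_mul, integral_const_mul] at h
  · change (n + 1) * gaussMomentIoi t β n + β * gaussMomentIoi t β (n + 1) -
      t⁻¹ * gaussMomentIoi t β (n + 2) = _ at h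
    have h2 : t⁻¹ * gaussMomentIoi t β (n + 2) =
        β * gaussMomentIoi t β (n + 1) + (n + 1) * gaussMomentIoi t β n := by
      norm_num at h
      linarith
    rw [← h2, mul_inv_cancel_left₀ ht.ne']
  exacts [((hK n β).const_mul _).integrableOn, ((hK (n + 1) β).const_mul β).integrableOn,
    (((hK n β).const_mul _).add ((hK (n + 1) β).const_mul β)).integrableOn,
    ((hK (n + 2) β).const_mul t⁻¹).integrableOn]

theorem gaussMomentIoi_three (ht : 0 < t) (β : ℝ) :
    gaussMomentIoi t β 3 =
      (β ^ 2 * t ^ 3 + 2 * t ^ 2) + (β ^ 3 * t ^ 3 + 3 * β * t ^ 2) * gaussMomentIoi t β 0 := by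
  rw [gaussMomentIoi_add_two ht, gaussMomentIoi_add_two ht, gaussMomentIoi_one ht]
  push_cast
  ring

theorem gaussMomentIoi_four (ht : 0 < t) (β : ℝ) :
    gaussMomentIoi t β 4 = (β ^ 3 * t ^ 4 + 5 * β * t ^ 3) +
      (β ^ 4 * t ^ 4 + 6 * β ^ 2 * t ^ 3 + 3 * t ^ 2) * gaussMomentIoi t β 0 := by
  rw [gaussMomentIoi_add_two ht, gaussMomentIoi_add_two ht, gaussMomentIoi_add_two ht,
    gaussMomentIoi_one ht]
  push_cast
  ring

theorem integral_Ioi_exp_neg_sq_div (ht : 0 < t) :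
    ∫ y in Ioi 0, exp (-y ^ 2 / (2 * t)) = √(π / 2) * √t := by
  calc ∫ y in Ioi 0, exp (-y ^ 2 / (2 * t)) = ∫ y in Ioi 0, exp (-(1 / (2 * t)) * y ^ 2) := by
        congr with y
        ring_nf
    _ = √(π / 2) * √t := by
        rw [integral_gaussian_Ioi, ← sqrt_mul (by positivity),
          show π / (1 / (2 * t)) = π / 2 * t * 2 ^ 2 by field_simp,
          sqrt_mul (by positivity), sqrt_sq (by norm_num)]
        ring

theorem intervalIntegral_exp_neg_sq_div (ht : 0 < t) (β : ℝ) :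
    ∫ y in 0..β * t, exp (-y ^ 2 / (2 * t)) = √t * alphaFun β t := by
  have hst : √t * √t = t := mul_self_sqrt ht.le
  have h := intervalIntegral.integral_comp_mul_left (a := 0) (b := β * √t)
    (fun y => exp (-y ^ 2 / (2 * t))) (sqrt_pos.2 ht).ne'
  rw [mul_zero, mul_left_comm, hst] at h
  have hscale : alphaFun β t = ∫ u in 0..β * √t, exp (-(√t * u) ^ 2 / (2 * t)) := by
    refine intervalIntegral.integral_congr fun u _ => ?_
    rw [mul_pow, sq_sqrt ht.le]
    field_simp
  rw [hscale, h, smul_eq_mul, ← mul_assoc, mul_inv_cancel₀ (sqrt_pos.2 ht).ne', one_mul]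

theorem gaussMomentIoi_zero (ht : 0 < t) (β : ℝ) :
    gaussMomentIoi t β 0 = exp (β ^ 2 * t / 2) * √t * (√(π / 2) + alphaFun β t) := by
  set G : ℝ → ℝ := fun y => exp (-y ^ 2 / (2 * t))
  have hG : Integrable G := by simpa using integrable_pow_mul_exp_quadratic ht 0 0
  have hcomplete_square (r : ℝ) : r ^ 0 * exp (-r ^ 2 / (2 * t) + β * r) =
      exp (β ^ 2 * t / 2) * G (r + -(β * t)) := by
    rw [pow_zero, one_mul, ← exp_add]
    congr 1
    field_simp
    ring
  have heven : ∫ y in -(β * t)..0, G y = ∫ y in 0..β * t, G y := by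
    simpa [G, neg_sq] using (intervalIntegral.integral_comp_neg (a := 0) (b := β * t) G).symm
  calc gaussMomentIoi t β 0 = exp (β ^ 2 * t / 2) * ∫ y in Ioi (-(β * t)), G y := by
        simp_rw [gaussMomentIoi, hcomplete_square, integral_const_mul, integral_Ioi_comp_add_right,
          zero_add]
    _ = exp (β ^ 2 * t / 2) * ((∫ y in 0..β * t, G y) + ∫ y in Ioi 0, G y) := by
        rw [← heven, intervalIntegral.integral_interval_add_Ioi hG.integrableOn hG.integrableOn]
    _ = _ := by
        rw [intervalIntegral_exp_neg_sq_div ht, integral_Ioi_exp_neg_sq_div ht]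
        ring

end GaussMoment

section SinhMoment

variable {t κ : ℝ}

noncomputable def sinhMoment (t κ : ℝ) (n : ℕ) : ℝ :=
  ∫ r in Ioi 0, exp (-r ^ 2 / (2 * t)) * r ^ n * sinh (κ * r)

theorem exp_mul_pow_mul_sinh_eq (t κ r : ℝ) (n : ℕ) :
    exp (-r ^ 2 / (2 * t)) * r ^ n * sinh (κ * r) =
      2⁻¹ * (r ^ n * exp (-r ^ 2 / (2 * t) + κ * r)) -
        2⁻¹ * (r ^ n * exp (-r ^ 2 / (2 * t) + -κ * r)) := by
  rw [sinh_eq, exp_add, exp_add, neg_mul]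
  ring

theorem integrable_exp_mul_pow_mul_sinh (ht : 0 < t) (κ : ℝ) (n : ℕ) :
    Integrable fun r => exp (-r ^ 2 / (2 * t)) * r ^ n * sinh (κ * r) := by
  simp_rw [exp_mul_pow_mul_sinh_eq]
  exact ((integrable_pow_mul_exp_quadratic ht n κ).const_mul _).sub
    ((integrable_pow_mul_exp_quadratic ht n (-κ)).const_mul _)

theorem sinhMoment_eq (ht : 0 < t) (κ : ℝ) (n : ℕ) :
    sinhMoment t κ n = 2⁻¹ * gaussMomentIoi t κ n - 2⁻¹ * gaussMomentIoi t (-κ) n := by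
  rw [sinhMoment]
  simp_rw [exp_mul_pow_mul_sinh_eq]
  rw [integral_sub ((integrable_pow_mul_exp_quadratic ht n κ).const_mul _).integrableOn
      ((integrable_pow_mul_exp_quadratic ht n (-κ)).const_mul _).integrableOn,
    integral_const_mul, integral_const_mul, gaussMomentIoi, gaussMomentIoi]

theorem sinhMoment_three (ht : 0 < t) (κ : ℝ) :
    sinhMoment t κ 3 = (3 * κ * t ^ 2 + κ ^ 3 * t ^ 3) * exp (κ ^ 2 * t / 2) * √(π / 2) * √t := by
  rw [sinhMoment_eq ht, gaussMomentIoi_three ht, gaussMomentIoi_three ht,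
    gaussMomentIoi_zero ht, gaussMomentIoi_zero ht, alphaFun_neg, neg_sq]
  ring

theorem sinhMoment_four (ht : 0 < t) (κ : ℝ) :
    sinhMoment t κ 4 = (5 * κ * t ^ 3 + κ ^ 3 * t ^ 4) +
      (3 * t ^ 2 + 6 * κ ^ 2 * t ^ 3 + κ ^ 4 * t ^ 4) * exp (κ ^ 2 * t / 2) * √t *
        alphaFun κ t := by
  rw [sinhMoment_eq ht, gaussMomentIoi_four ht, gaussMomentIoi_four ht,
    gaussMomentIoi_zero ht, gaussMomentIoi_zero ht, alphaFun_neg, neg_sq]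
  ring

theorem one_add_two_mul_sinhMoment_div_eq (hκ : κ ≠ 0) (ht : 0 < t) :
    1 + 2 * κ * sinhMoment t κ 4 / sinhMoment t κ 3 =
      1 + 2 * κ * √(2 / π) * t ^ ((1 : ℝ) / 2) * (κ ^ 2 * t + 5) / (κ ^ 2 * t + 3) *
          exp (-κ ^ 2 * t / 2) +
        2 * √(2 / π) * (κ ^ 4 * t ^ 2 + 6 * κ ^ 2 * t + 3) / (κ ^ 2 * t + 3) * alphaFun κ t := by
  have hS : 0 < √t := sqrt_pos.2 ht
  have hst := sq_sqrt ht.le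
  rw [sinhMoment_four ht, sinhMoment_three ht, ← sqrt_eq_rpow, neg_mul, neg_div, exp_neg,
    ← inv_div π 2, sqrt_inv]
  generalize √t = S at hS hst ⊢
  subst hst
  field_simp
  ring

end SinhMoment

/-- Lower bound on `D(t) = η'(t)` for `κ > 0` and `t > 0`. -/
theorem eta_deriv_lower_bound (κ : ℝ) (hκ : 0 < κ) (t : ℝ) (ht : 0 < t) :
    etaDeriv κ t >
      (1 / 2) * κ ^ 2 * t * (κ ^ 2 * t + 5) +
        (1 / 2) * κ * t ^ ((1 : ℝ) / 2) * (κ ^ 4 * t ^ 2 + 6 * κ ^ 2 * t + 3) *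
          Real.exp (κ ^ 2 * t / 2) * alphaFun κ t -
        (1 / 2) * Real.sqrt (π / 2) * κ * t ^ ((1 : ℝ) / 2) * (κ ^ 2 * t + 3) *
          Real.exp (κ ^ 2 * t / 2) *
          Real.log (1 +
            2 * κ * Real.sqrt (2 / π) * t ^ ((1 : ℝ) / 2) * (κ ^ 2 * t + 5) /
              (κ ^ 2 * t + 3) * Real.exp (-κ ^ 2 * t / 2) +
            2 * Real.sqrt (2 / π) * (κ ^ 4 * t ^ 2 + 6 * κ ^ 2 * t + 3) /
              (κ ^ 2 * t + 3) * alphaFun κ t) := by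
  have hw_mul : (fun r => exp (-r ^ 2 / (2 * t)) * r ^ 3 * sinh (κ * r) * r) =
      fun r => exp (-r ^ 2 / (2 * t)) * r ^ 4 * sinh (κ * r) := by
    funext r
    ring
  have key := integral_mul_log_sinh_div_self_gt hκ
    (w := fun r => exp (-r ^ 2 / (2 * t)) * r ^ 3 * sinh (κ * r))
    (fun r hr => mul_pos (mul_pos (exp_pos _) (pow_pos hr 3)) (sinh_pos_iff.2 (mul_pos hκ hr)))
    (integrable_exp_mul_pow_mul_sinh ht κ 3).integrableOn
    (hw_mul ▸ (integrable_exp_mul_pow_mul_sinh ht κ 4).integrableOn)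
  rw [hw_mul] at key
  change κ * sinhMoment t κ 4 - sinhMoment t κ 3 *
    log (1 + 2 * κ * sinhMoment t κ 4 / sinhMoment t κ 3) < _ at key
  rw [gt_iff_lt, etaDeriv, ← one_add_two_mul_sinhMoment_div_eq hκ.ne' ht, ← sqrt_eq_rpow]
  refine lt_of_eq_of_lt ?_ (mul_lt_mul_of_pos_left key (by positivity : (0 : ℝ) < 1 / (2 * t ^ 2)))
  rw [sinhMoment_four ht, sinhMoment_three ht]
  field_simp
  ring
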